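/- Define, for (s,t) ∈ (0,∞)² and (x,y) ∈ ℝ², the correlation kernel of the Dyson model started from the integer-lattice configuration: K^{ℤ}(s,x;t,y) = K_sin(s,x;t,y) + ∑_{n ∈ ℤ∖{0}} e^{2πixn − 2π²sn²} ∫_0^1 e^{π²u²(t−s)/2} cos[πu((y−x) − 2πi s n)] du. Then for every fixed (s,t) ∈ (0,∞)² and (x,y) ∈ ℝ², lim_{u→∞} K^{ℤ}(u+s, x; u+t, y) = K_sin(s,x;t,y); i.e., the correction term ∑_{n≠0} e^{2πixn − 2π²(u+s)n²} ∫_0^1 e^{π²v²(t−s)/2} cos[πv((y−x) − 2πi(u+s)n)] dv tends to 0 as u → ∞. -/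

import Mathlib

open Real

/-- The extended sine kernel `K_sin(s,x;t,y)` (as a complex number; it is real-valued). -/
noncomputable def extendedSineKernel (s x t y : ℝ) : ℂ :=
  if t > s then
    ∫ u in (0 : ℝ)..1, Complex.exp ((Real.pi ^ 2 * u ^ 2 * (t - s) / 2 : ℝ) : ℂ)
      * Complex.cos ((Real.pi * u * (y - x) : ℝ) : ℂ)
  else if t = s then
    Complex.sin ((Real.pi * (y - x) : ℝ) : ℂ) / ((Real.pi * (y - x) : ℝ) : ℂ)
  else
    -∫ u in Set.Ioi (1 : ℝ), Complex.exp ((Real.pi ^ 2 * u ^ 2 * (t - s) / 2 : ℝ) : ℂ)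
      * Complex.cos ((Real.pi * u * (y - x) : ℝ) : ℂ)

/-- The correlation kernel `K^ℤ(s,x;t,y)` of the Dyson model started from the
configuration in which every integer point is occupied by one particle:
`K^ℤ = K_sin + ∑_{n ≠ 0} e^{2πixn − 2π²sn²} ∫_0^1 e^{π²u²(t−s)/2}
  cos[πu((y−x) − 2πi s n)] du`. -/
noncomputable def dysonLatticeKernel (s x t y : ℝ) : ℂ :=
  extendedSineKernel s x t y
    + ∑' n : ℤ, if n = 0 then 0 else
        Complex.exp (2 * (Real.pi : ℂ) * Complex.I * (x : ℂ) * (n : ℂ)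
            - 2 * (Real.pi : ℂ) ^ 2 * (s : ℂ) * (n : ℂ) ^ 2)
          * ∫ u in (0 : ℝ)..1,
              Complex.exp ((Real.pi ^ 2 * u ^ 2 * (t - s) / 2 : ℝ) : ℂ)
                * Complex.cos ((Real.pi : ℂ) * (u : ℂ)
                    * (((y : ℂ) - (x : ℂ)) - 2 * (Real.pi : ℂ) * Complex.I * (s : ℂ) * (n : ℂ)))

/-!
For `n ≠ 0` the `n`-th correction summand at time `σ` has modulus `e^{-2π²σn²}` times an
integral whose cosine factor grows at most like `e^{2π²σ|n|v}`, so it is bounded by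
`e^{π²|t-s|/2} e^{-2π²σ(n²-|n|)} / (2π²σ|n|)`. For `σ ≥ s` this is at most `1/σ` times a
summable sequence independent of `σ`, so the whole correction is `O(1/σ)` and vanishes along
`σ = u + s → ∞`, while the sine kernel only depends on `t - s`.
-/

open Filter Topology

open Complex in
lemma Complex.norm_cos_le_exp_abs_im (z : ℂ) : ‖cos z‖ ≤ Real.exp |z.im| := by
  have hnorm : ∀ w : ℂ, |w.re| ≤ |z.im| → ‖exp w‖ ≤ Real.exp |z.im| := fun w hw => by
    rw [norm_exp]; exact Real.exp_le_exp.2 ((le_abs_self _).trans hw)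
  have h₁ := hnorm (z * I) (by simp)
  have h₂ := hnorm (-z * I) (by simp)
  rw [cos, norm_div, Complex.norm_two]
  linarith [norm_add_le (exp (z * I)) (exp (-z * I))]

lemma integral_exp_mul_le_exp_div {b : ℝ} (hb : 0 < b) :
    ∫ v in (0 : ℝ)..1, Real.exp (b * v) ≤ Real.exp b / b := by
  rw [intervalIntegral.integral_comp_mul_left (fun v => Real.exp v) hb.ne', integral_exp,
    mul_zero, mul_one, Real.exp_zero, smul_eq_mul, ← div_eq_inv_mul]
  gcongr
  linarith

lemma summable_exp_neg_mul_sq_sub_abs {c : ℝ} (hc : 0 < c) :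
    Summable fun n : ℤ => Real.exp (-c * ((n : ℝ) ^ 2 - |(n : ℝ)|)) := by
  refine (summable_pow_mul_jacobiTheta₂_term_bound (c / (2 * π)) (T := c / π) (by positivity) 0
    ).congr fun n => ?_
  rw [pow_zero, one_mul, Int.cast_abs]
  congr 1
  field_simp

lemma norm_integral_exp_mul_cos_le (d : ℝ) {w : ℂ} (hw : w.im ≠ 0) :
    ‖∫ v in (0 : ℝ)..1, Complex.exp ((π ^ 2 * v ^ 2 * d / 2 : ℝ) : ℂ)
        * Complex.cos ((π : ℂ) * (v : ℂ) * w)‖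
      ≤ Real.exp (π ^ 2 * |d| / 2) * (Real.exp (π * |w.im|) / (π * |w.im|)) := by
  have hb : 0 < π * |w.im| := by positivity
  have hpointwise : ∀ v ∈ Set.Ioc (0 : ℝ) 1,
      ‖Complex.exp ((π ^ 2 * v ^ 2 * d / 2 : ℝ) : ℂ) * Complex.cos ((π : ℂ) * (v : ℂ) * w)‖
        ≤ Real.exp (π ^ 2 * |d| / 2) * Real.exp (π * |w.im| * v) := by
    rintro v ⟨hv₀, hv₁⟩
    rw [norm_mul, Complex.norm_exp_ofReal]
    gcongr ?_ * ?_
    · have : v ^ 2 * d ≤ |d| := by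
        nlinarith [abs_nonneg d, le_abs_self d, neg_abs_le d, mul_le_one₀ hv₁ hv₀.le hv₁]
      exact Real.exp_le_exp.2 (by nlinarith [sq_nonneg π])
    · refine (Complex.norm_cos_le_exp_abs_im _).trans (le_of_eq ?_)
      simp [abs_mul, abs_of_pos hv₀, abs_of_pos Real.pi_pos]
      ring
  calc _ ≤ ∫ v in (0 : ℝ)..1, Real.exp (π ^ 2 * |d| / 2) * Real.exp (π * |w.im| * v) :=
        intervalIntegral.norm_integral_le_of_norm_le zero_le_one
          (MeasureTheory.ae_of_all _ hpointwise)
          (Continuous.intervalIntegrable (by fun_prop) _ _)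
    _ ≤ _ := by
      rw [intervalIntegral.integral_const_mul]
      gcongr
      exact integral_exp_mul_le_exp_div hb

lemma extendedSineKernel_add_add (u s x t y : ℝ) :
    extendedSineKernel (u + s) x (u + t) y = extendedSineKernel s x t y := by
  simp only [extendedSineKernel, add_lt_add_iff_left, add_right_inj, add_sub_add_left_eq_sub]

noncomputable def latticeCorrectionTerm (σ d x y : ℝ) (n : ℤ) : ℂ :=
  Complex.exp (2 * (π : ℂ) * Complex.I * (x : ℂ) * (n : ℂ)
      - 2 * (π : ℂ) ^ 2 * (σ : ℂ) * (n : ℂ) ^ 2)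
    * ∫ u in (0 : ℝ)..1, Complex.exp ((π ^ 2 * u ^ 2 * d / 2 : ℝ) : ℂ)
        * Complex.cos ((π : ℂ) * (u : ℂ)
            * (((y : ℂ) - (x : ℂ)) - 2 * (π : ℂ) * Complex.I * (σ : ℂ) * (n : ℂ)))

lemma dysonLatticeKernel_add_add (u s x t y : ℝ) :
    dysonLatticeKernel (u + s) x (u + t) y = extendedSineKernel s x t y
      + ∑' n : ℤ, if n = 0 then 0 else latticeCorrectionTerm (u + s) (t - s) x y n := by
  rw [dysonLatticeKernel, extendedSineKernel_add_add, add_sub_add_left_eq_sub]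
  rfl

lemma norm_latticeCorrectionTerm_le (d x y : ℝ) {s σ : ℝ} (hσ : 0 < σ) (hsσ : s ≤ σ) {n : ℤ}
    (hn : n ≠ 0) :
    ‖latticeCorrectionTerm σ d x y n‖ ≤ Real.exp (π ^ 2 * |d| / 2) / (2 * π ^ 2 * σ)
      * Real.exp (-(2 * π ^ 2 * s) * ((n : ℝ) ^ 2 - |(n : ℝ)|)) := by
  have hn₁ : 1 ≤ |(n : ℝ)| := by rw [← Int.cast_abs]; exact_mod_cast Int.one_le_abs hn
  have hsq : (n : ℝ) ^ 2 = |(n : ℝ)| ^ 2 := (sq_abs _).symm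
  have hexp : ‖Complex.exp (2 * (π : ℂ) * Complex.I * (x : ℂ) * (n : ℂ)
      - 2 * (π : ℂ) ^ 2 * (σ : ℂ) * (n : ℂ) ^ 2)‖
      = Real.exp (-(2 * π ^ 2 * σ) * (n : ℝ) ^ 2) := by
    rw [Complex.norm_exp]
    congr 1
    simp [sq]
  set w : ℂ := ((y : ℂ) - (x : ℂ)) - 2 * (π : ℂ) * Complex.I * (σ : ℂ) * (n : ℂ)
  have him : w.im = -(2 * π * σ * n) := by simp [w]
  have hrate : π * |w.im| = 2 * π ^ 2 * σ * |(n : ℝ)| := by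
    rw [him, abs_neg, abs_mul, abs_of_pos (by positivity : 0 < 2 * π * σ)]
    ring
  have hint := norm_integral_exp_mul_cos_le d (w := w)
    (by rw [him]; simp [hn, hσ.ne', Real.pi_ne_zero])
  rw [hrate] at hint
  set m := |(n : ℝ)|
  set E := Real.exp (π ^ 2 * |d| / 2)
  calc ‖latticeCorrectionTerm σ d x y n‖
      ≤ Real.exp (-(2 * π ^ 2 * σ) * m ^ 2)
          * (E * (Real.exp (2 * π ^ 2 * σ * m) / (2 * π ^ 2 * σ * m))) := by
        rw [latticeCorrectionTerm, norm_mul, hexp, hsq]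
        gcongr
    _ = E / (2 * π ^ 2 * σ * m) * Real.exp (-(2 * π ^ 2 * σ) * (m ^ 2 - m)) := by
        rw [show -(2 * π ^ 2 * σ) * (m ^ 2 - m) = -(2 * π ^ 2 * σ) * m ^ 2 + 2 * π ^ 2 * σ * m
          by ring, Real.exp_add]
        ring
    _ ≤ E / (2 * π ^ 2 * σ) * Real.exp (-(2 * π ^ 2 * s) * ((n : ℝ) ^ 2 - m)) := by
        have hm : 0 ≤ m ^ 2 - m := by nlinarith
        rw [hsq]
        refine mul_le_mul ?_ (Real.exp_le_exp.2 ?_) (Real.exp_nonneg _) (by positivity)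
        · exact div_le_div_of_nonneg_left (by positivity) (by positivity)
            (le_mul_of_one_le_right (by positivity) hn₁)
        · nlinarith [mul_nonneg (mul_nonneg (sub_nonneg.2 hsσ) hm) (sq_nonneg π)]

lemma norm_tsum_latticeCorrectionTerm_le (d x y : ℝ) {s σ : ℝ} (hs : 0 < s) (hsσ : s ≤ σ) :
    ‖∑' n : ℤ, if n = 0 then 0 else latticeCorrectionTerm σ d x y n‖
      ≤ Real.exp (π ^ 2 * |d| / 2) / (2 * π ^ 2 * σ)
        * ∑' n : ℤ, Real.exp (-(2 * π ^ 2 * s) * ((n : ℝ) ^ 2 - |(n : ℝ)|)) := by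
  have hσ : 0 < σ := hs.trans_le hsσ
  refine tsum_of_norm_bounded
    ((summable_exp_neg_mul_sq_sub_abs (by positivity)).hasSum.mul_left _) fun n => ?_
  split_ifs with hn
  · rw [norm_zero]
    positivity
  · exact norm_latticeCorrectionTerm_le d x y hσ hsσ hn

lemma tendsto_tsum_latticeCorrectionTerm (d x y : ℝ) {s : ℝ} (hs : 0 < s) :
    Tendsto (fun u : ℝ => ∑' n : ℤ, if n = 0 then 0 else latticeCorrectionTerm (u + s) d x y n)
      atTop (𝓝 0) := by
  have hbound : Tendsto (fun u : ℝ => Real.exp (π ^ 2 * |d| / 2) / (2 * π ^ 2 * (u + s))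
      * ∑' n : ℤ, Real.exp (-(2 * π ^ 2 * s) * ((n : ℝ) ^ 2 - |(n : ℝ)|))) atTop (𝓝 0) := by
    simpa only [zero_mul, id] using (tendsto_const_nhds.div_atTop
      ((tendsto_atTop_add_const_right _ s tendsto_id).const_mul_atTop
        (by positivity : (0 : ℝ) < 2 * π ^ 2))).mul_const _
  refine squeeze_zero_norm' ?_ hbound
  filter_upwards [eventually_ge_atTop 0] with u hu
  exact norm_tsum_latticeCorrectionTerm_le d x y hs (by linarith)

theorem statement_18_general (s t x y : ℝ) (hs : 0 < s) :
    Filter.Tendsto (fun u : ℝ => dysonLatticeKernel (u + s) x (u + t) y)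
      Filter.atTop (nhds (extendedSineKernel s x t y)) := by
  simp only [dysonLatticeKernel_add_add]
  simpa only [add_zero] using
    tendsto_const_nhds.add (tendsto_tsum_latticeCorrectionTerm (t - s) x y hs)

/-- Relaxation to the extended sine kernel: for every fixed
`(s,t) ∈ (0,∞)²` and `(x,y) ∈ ℝ²`,
`lim_{u→∞} K^ℤ(u+s, x; u+t, y) = K_sin(s,x;t,y)`. -/
theorem statement_18 (s t x y : ℝ) (hs : 0 < s) (ht : 0 < t) :
    Filter.Tendsto (fun u : ℝ => dysonLatticeKernel (u + s) x (u + t) y)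
      Filter.atTop (nhds (extendedSineKernel s x t y)) :=
  statement_18_general s t x y hs
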